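/- arXiv:1507.01490 — 3 statements merged into one kernel-verified Lean document; each statement's English description precedes it below -/
import Mathlib

section
/- For every vertex v of a finite graph G and every natural number d ≥ 0, the farness f(v) = Σ_{w ∈ R(v)} dist(v,w) satisfies f(v) ≥ f_d(v) + (d+1)·γ_{d+1}(v) + (d+2)·(r(v) − n_{d+1}(v)), where R(v) is the set of vertices reachable from v, r(v) = |R(v)|, f_d(v) is the sum of dist(v,w) over vertices w with dist(v,w) ≤ d, γ_{d+1}(v) is the number of vertices at distance exactly d+1 from v, and n_{d+1}(v) is the number of vertices at distance at most d+1 from v. -/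
open Finset

variable {V : Type*}

/-- `steps r n v w` : there is a walk of length `n` from `v` to `w` along relation `r`. -/
def steps (r : V → V → Prop) : ℕ → V → V → Prop
  | 0, v, w => v = w
  | n+1, v, w => ∃ u, r v u ∧ steps r n u w

/-- `w` is reachable from `v`. -/
def reach (r : V → V → Prop) (v w : V) : Prop := ∃ n, steps r n v w

/-- shortest-path distance (number of edges). -/
noncomputable def ddist (r : V → V → Prop) (v w : V) : ℕ := sInf {n | steps r n v w}

open scoped Classical in
/-- set of vertices reachable from `v`. -/
noncomputable def Rset (r : V → V → Prop) [Fintype V] (v : V) : Finset V :=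
  univ.filter (fun w => reach r v w)

/-- number of vertices reachable from `v`. -/
noncomputable def rnum (r : V → V → Prop) [Fintype V] (v : V) : ℕ := (Rset r v).card

/-- farness of `v`. -/
noncomputable def farn (r : V → V → Prop) [Fintype V] (v : V) : ℕ :=
  ∑ w ∈ Rset r v, ddist r v w

open scoped Classical in
/-- ball of radius `d` around `v`. -/
noncomputable def ball (r : V → V → Prop) [Fintype V] (v : V) (d : ℕ) : Finset V :=
  univ.filter (fun w => reach r v w ∧ ddist r v w ≤ d)

/-- number of vertices at distance at most `d` from `v`. -/
noncomputable def nball (r : V → V → Prop) [Fintype V] (v : V) (d : ℕ) : ℕ := (ball r v d).card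

open scoped Classical in
/-- set of vertices at distance exactly `d` from `v`. -/
noncomputable def sphere (r : V → V → Prop) [Fintype V] (v : V) (d : ℕ) : Finset V :=
  univ.filter (fun w => reach r v w ∧ ddist r v w = d)

/-- number of vertices at distance exactly `d` from `v`. -/
noncomputable def gam (r : V → V → Prop) [Fintype V] (v : V) (d : ℕ) : ℕ := (sphere r v d).card

/-- farness of `v` restricted to distance at most `d`. -/
noncomputable def fd (r : V → V → Prop) [Fintype V] (v : V) (d : ℕ) : ℕ :=
  ∑ w ∈ ball r v d, ddist r v w

open scoped Classical in
/-- out-degree of `u`. -/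
noncomputable def outdeg (r : V → V → Prop) [Fintype V] (u : V) : ℕ :=
  (univ.filter (fun w => r u w)).card

/-- `gtil r v d` = upper bound γ̃_{d+1}(v) = Σ_{u : dist(v,u)=d} outdeg(u). -/
noncomputable def gtil (r : V → V → Prop) [Fintype V] (v : V) (d : ℕ) : ℕ :=
  ∑ u ∈ sphere r v d, outdeg r u


/-! Split the reachable vertices by distance into those at distance `≤ d`, `= d + 1` and
`> d + 1`; a vertex of the last group contributes at least `d + 2` to the farness. This is a
termwise inequality for any finite sum of naturals. -/

theorem sum_filter_le_add_mul_card_le_sum {α : Type*} (s : Finset α) (f : α → ℕ) (d : ℕ) :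
    ∑ x ∈ s.filter (fun x => f x ≤ d), f x + (d + 1) * #(s.filter (fun x => f x = d + 1))
        + (d + 2) * #(s.filter (fun x => d + 1 < f x)) ≤ ∑ x ∈ s, f x := by
  simp only [sum_filter, card_filter, mul_sum, ← sum_add_distrib]
  refine sum_le_sum fun x _ => ?_
  split_ifs <;> omega

section

variable [Fintype V] (r : V → V → Prop) (v : V) (d : ℕ)

theorem ball_eq_filter_Rset : ball r v d = (Rset r v).filter (fun w => ddist r v w ≤ d) := by
  ext w; simp [ball, Rset]

theorem sphere_eq_filter_Rset : sphere r v d = (Rset r v).filter (fun w => ddist r v w = d) := by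
  ext w; simp [sphere, Rset]

theorem card_filter_lt_add_nball :
    #((Rset r v).filter (fun w => d < ddist r v w)) + nball r v d = rnum r v := by
  rw [nball, rnum, ball_eq_filter_Rset, add_comm]
  simpa only [not_le] using card_filter_add_card_filter_not (s := Rset r v) (ddist r v · ≤ d)

end

theorem farness_lower_bound_basic [Fintype V] (r : V → V → Prop) (v : V) (d : ℕ) :
    (farn r v : ℤ) ≥
      (fd r v d : ℤ) + (d + 1) * (gam r v (d + 1) : ℤ)
        + (d + 2) * ((rnum r v : ℤ) - (nball r v (d + 1) : ℤ)) := by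
  have hsum := sum_filter_le_add_mul_card_le_sum (Rset r v) (ddist r v) d
  rw [← ball_eq_filter_Rset, ← sphere_eq_filter_Rset] at hsum
  have hcard := card_filter_lt_add_nball r v (d + 1)
  change fd r v d + (d + 1) * gam r v (d + 1) + _ ≤ farn r v at hsum
  rw [← hcard, Nat.cast_add, add_sub_cancel_right]
  exact_mod_cast hsum
end

section
/- For every vertex v of a finite graph and every d ≥ 0, f(v) ≥ f_d(v) − γ_{d+1}(v) + (d+2)·(r(v) − n_d(v)), where f(v) is the farness of v, f_d(v) the farness restricted to vertices at distance ≤ d, γ_{d+1}(v) the number of vertices at distance exactly d+1, r(v) the number of vertices reachable from v, and n_d(v) the number of vertices at distance ≤ d from v. -/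
open Finset

variable {V : Type*}

/-- The pointwise inequality behind the bound: `x ≥ [x ≤ d] x - [x = d + 1] + (d + 2) [d < x]`. -/
theorem Finset.sum_filter_le_sub_card_add_mul_le_sum {α : Type*} (s : Finset α) (f : α → ℕ)
    (d : ℕ) :
    ((∑ w ∈ s.filter (f · ≤ d), f w : ℕ) : ℤ) - (#(s.filter (f · = d + 1)) : ℤ)
        + (d + 2) * ((#s : ℤ) - (#(s.filter (f · ≤ d)) : ℤ)) ≤ ((∑ w ∈ s, f w : ℕ) : ℤ) := by
  have hcard : (#s : ℤ) - #(s.filter (f · ≤ d)) = #(s.filter (¬f · ≤ d)) := by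
    rw [← card_filter_add_card_filter_not (s := s) (f · ≤ d)]
    push_cast
    ring
  rw [hcard, sum_filter]
  simp only [card_filter, Nat.cast_sum, mul_sum, ← sum_sub_distrib,
    ← sum_add_distrib]
  gcongr with w
  split_ifs <;> push_cast <;> omega

theorem ball_eq_filter [Fintype V] (r : V → V → Prop) (v : V) (d : ℕ) :
    ball r v d = (Rset r v).filter (ddist r v · ≤ d) := by
  ext w
  simp [ball, Rset]

theorem sphere_eq_filter [Fintype V] (r : V → V → Prop) (v : V) (d : ℕ) :
    sphere r v d = (Rset r v).filter (ddist r v · = d) := by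
  ext w
  simp [sphere, Rset]

theorem farness_lower_bound [Fintype V] (r : V → V → Prop) (v : V) (d : ℕ) :
    (farn r v : ℤ) ≥
      (fd r v d : ℤ) - (gam r v (d + 1) : ℤ)
        + (d + 2) * ((rnum r v : ℤ) - (nball r v d : ℤ)) := by
  rw [farn, fd, gam, rnum, nball, ball_eq_filter, sphere_eq_filter]
  exact (Rset r v).sum_filter_le_sub_card_add_mul_le_sum (ddist r v) d
end

section
/- Let v be a vertex of a finite directed graph, d ≥ 0, and let γ̃_{d+1}(v) = Σ_{u : dist(v,u)=d} outdeg(u). Then γ̃_{d+1}(v) ≥ γ_{d+1}(v), the number of vertices at distance exactly d+1 from v, and consequently f(v) ≥ f_d(v) − γ̃_{d+1}(v) + (d+2)·(r(v) − n_d(v)). -/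
open Finset

variable {V : Type*}

/-!
The last edge of a shortest walk of length `d + 1` leaves a vertex at distance `d`, so the
sphere of radius `d + 1` is covered by the out-neighbourhoods of the sphere of radius `d`, and
`γ_{d+1} ≤ γ̃_{d+1}`. Reachable vertices outside the ball of radius `d` are at distance at least
`d + 2`, except those on the sphere of radius `d + 1`, which fall short by one; hence they
contribute at least `(d + 2)(r - n_d) - γ_{d+1}` to the farness.
-/

section Walks

variable {r : V → V → Prop}

lemma steps_succ_iff_exists_last {n : ℕ} {v w : V} :
    steps r (n + 1) v w ↔ ∃ u, steps r n v u ∧ r u w := by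
  induction n generalizing v with
  | zero => simp [steps]
  | succ n ih =>
    simp only [steps] at ih ⊢
    simp only [ih]
    aesop

lemma steps_ddist {v w : V} (h : reach r v w) : steps r (ddist r v w) v w :=
  Nat.sInf_mem h

lemma ddist_le_of_steps {n : ℕ} {v w : V} (h : steps r n v w) : ddist r v w ≤ n :=
  Nat.sInf_le h

lemma exists_ddist_eq_of_ddist_eq_succ {v w : V} {d : ℕ} (hw : reach r v w)
    (hd : ddist r v w = d + 1) : ∃ u, reach r v u ∧ ddist r v u = d ∧ r u w := by
  obtain ⟨u, hvu, huw⟩ := steps_succ_iff_exists_last.mp (hd ▸ steps_ddist hw)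
  have hu : reach r v u := ⟨d, hvu⟩
  have hle : ddist r v u ≤ d := ddist_le_of_steps hvu
  have hge : d + 1 ≤ ddist r v u + 1 :=
    hd ▸ ddist_le_of_steps (steps_succ_iff_exists_last.mpr ⟨u, steps_ddist hu, huw⟩)
  exact ⟨u, hu, by omega, huw⟩

end Walks

section Spheres

variable [Fintype V] {r : V → V → Prop} {v w : V} {d : ℕ}

lemma mem_sphere : w ∈ sphere r v d ↔ reach r v w ∧ ddist r v w = d := by
  simp [sphere]

variable (r v d) in
lemma gam_succ_le_gtil : gam r v (d + 1) ≤ gtil r v d := by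
  classical
  have hcover : sphere r v (d + 1) ⊆
      (sphere r v d).biUnion fun u => univ.filter fun w => r u w := fun w hw => by
    obtain ⟨u, hu, hud, huw⟩ := exists_ddist_eq_of_ddist_eq_succ (mem_sphere.mp hw).1
      (mem_sphere.mp hw).2
    exact mem_biUnion.mpr ⟨u, mem_sphere.mpr ⟨hu, hud⟩, by simpa using huw⟩
  calc gam r v (d + 1)
      ≤ ((sphere r v d).biUnion fun u => univ.filter fun w => r u w).card := card_le_card hcover
    _ ≤ ∑ u ∈ sphere r v d, (univ.filter fun w => r u w).card := card_biUnion_le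
    _ = gtil r v d := rfl

lemma ball_subset_Rset : ball r v d ⊆ Rset r v := fun w hw => by
  simp only [ball, Rset, mem_filter, mem_univ, true_and] at hw ⊢
  exact hw.1

variable [DecidableEq V]

lemma mem_Rset_sdiff_ball : w ∈ Rset r v \ ball r v d ↔ reach r v w ∧ d < ddist r v w := by
  simp only [Rset, ball, mem_sdiff, mem_filter, mem_univ, true_and, not_and, not_le]
  exact and_congr_right fun hw => ⟨fun h => h hw, fun h _ => h⟩

variable (r v d)

lemma farn_eq_fd_add_sum_sdiff :
    farn r v = fd r v d + ∑ w ∈ Rset r v \ ball r v d, ddist r v w := by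
  rw [farn, fd, ← sum_sdiff ball_subset_Rset, add_comm]

lemma rnum_eq_nball_add_card_sdiff : rnum r v = nball r v d + #(Rset r v \ ball r v d) := by
  rw [rnum, nball, ← card_sdiff_add_card_eq_card ball_subset_Rset, add_comm]

lemma mul_card_sdiff_ball_le :
    (d + 2) * #(Rset r v \ ball r v d) ≤
      ∑ w ∈ Rset r v \ ball r v d, ddist r v w + gam r v (d + 1) := by
  set S := Rset r v \ ball r v d
  have hpoint : ∀ w ∈ S, d + 2 ≤ ddist r v w + if w ∈ sphere r v (d + 1) then 1 else 0 := by
    intro w hw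
    obtain ⟨hreach, hlt⟩ := mem_Rset_sdiff_ball.mp hw
    split_ifs with hs
    · omega
    · have : ddist r v w ≠ d + 1 := fun h => hs (mem_sphere.mpr ⟨hreach, h⟩)
      omega
  calc (d + 2) * #S = ∑ w ∈ S, (d + 2) := by rw [sum_const, smul_eq_mul, mul_comm]
    _ ≤ ∑ w ∈ S, (ddist r v w + if w ∈ sphere r v (d + 1) then 1 else 0) := sum_le_sum hpoint
    _ = ∑ w ∈ S, ddist r v w + #(S ∩ sphere r v (d + 1)) := by
      rw [sum_add_distrib, sum_boole, filter_mem_eq_inter, Nat.cast_id]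
    _ ≤ ∑ w ∈ S, ddist r v w + gam r v (d + 1) := by
      gcongr; exact card_le_card inter_subset_right

end Spheres

theorem farness_lower_bound_outdeg [Fintype V] (r : V → V → Prop) (v : V) (d : ℕ) :
    gam r v (d + 1) ≤ gtil r v d ∧
    (farn r v : ℤ) ≥
      (fd r v d : ℤ) - (gtil r v d : ℤ)
        + (d + 2) * ((rnum r v : ℤ) - (nball r v d : ℤ)) := by
  classical
  have hgam := gam_succ_le_gtil r v d
  have houter := mul_card_sdiff_ball_le r v d
  refine ⟨hgam, ?_⟩
  rw [farn_eq_fd_add_sum_sdiff r v d, rnum_eq_nball_add_card_sdiff r v d]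
  push_cast
  zify at hgam houter
  linarith
end
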